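/- Let Γ be a p×k real matrix of full column rank k, and define G_s as the p(p+1)/2 × k matrix with rows indexed by pairs (j,l), 1 ≤ j ≤ l ≤ p, and entries G_{(j,l),h} = γ_{jh} γ_{lh}. If for binary vectors ψ, ψ̃ ∈ {0,1}^k we have Γ diag(ψ) Γᵀ = Γ diag(ψ̃) Γᵀ and rank(G_s) = k, then ψ = ψ̃. -/

import Mathlib

open Matrix

theorem Matrix.mulVec_injective_of_rank_eq_card {K m n : Type*} [Field K] [Fintype n]
    (A : Matrix m n K) (hA : A.rank = Fintype.card n) : Function.Injective A.mulVec := by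
  have hrank_nullity := A.mulVecLin.finrank_range_add_finrank_ker
  rw [← Matrix.rank, hA, Module.finrank_fintype_fun_eq_card] at hrank_nullity
  have hker : LinearMap.ker A.mulVecLin = ⊥ := Submodule.finrank_eq_zero.mp (by omega)
  exact LinearMap.ker_eq_bot.mp hker

theorem Matrix.mul_diagonal_mul_transpose_apply {R m n : Type*} [CommSemiring R] [Fintype n]
    [DecidableEq n] (A : Matrix m n R) (d : n → R) (i j : m) :
    (A * diagonal d * Aᵀ) i j = ∑ h, A i h * A j h * d h := by
  rw [mul_apply]
  exact Finset.sum_congr rfl fun h _ => by rw [mul_diagonal, transpose_apply]; ring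

theorem sparsity_pattern_unique_general {p k : ℕ}
    (Γ : Matrix (Fin p) (Fin k) ℝ)
    (Gs : Matrix {pr : Fin p × Fin p // pr.1 ≤ pr.2} (Fin k) ℝ)
    (hGs : ∀ (jl : {pr : Fin p × Fin p // pr.1 ≤ pr.2}) (h : Fin k),
      Gs jl h = Γ jl.1.1 h * Γ jl.1.2 h)
    (hrank : Gs.rank = k)
    (ψ ψ' : Fin k → ℝ)
    (heq : Γ * Matrix.diagonal ψ * Γ.transpose = Γ * Matrix.diagonal ψ' * Γ.transpose) :
    ψ = ψ' := by
  have hGs_mulVec : ∀ φ : Fin k → ℝ,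
      Gs *ᵥ φ = fun jl => (Γ * diagonal φ * Γᵀ) jl.1.1 jl.1.2 := fun φ => by
    ext jl
    simp only [mulVec, dotProduct, hGs, mul_diagonal_mul_transpose_apply]
  apply Gs.mulVec_injective_of_rank_eq_card (by rw [hrank, Fintype.card_fin])
  rw [hGs_mulVec, hGs_mulVec, heq]

theorem sparsity_pattern_unique {p k : ℕ}
    (Γ : Matrix (Fin p) (Fin k) ℝ) (hΓ : Γ.rank = k)
    (Gs : Matrix {pr : Fin p × Fin p // pr.1 ≤ pr.2} (Fin k) ℝ)
    (hGs : ∀ (jl : {pr : Fin p × Fin p // pr.1 ≤ pr.2}) (h : Fin k),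
      Gs jl h = Γ jl.1.1 h * Γ jl.1.2 h)
    (hrank : Gs.rank = k)
    (ψ ψ' : Fin k → ℝ)
    (hψ : ∀ h, ψ h = 0 ∨ ψ h = 1) (hψ' : ∀ h, ψ' h = 0 ∨ ψ' h = 1)
    (heq : Γ * Matrix.diagonal ψ * Γ.transpose = Γ * Matrix.diagonal ψ' * Γ.transpose) :
    ψ = ψ' :=
  sparsity_pattern_unique_general Γ Gs hGs hrank ψ ψ' heq
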